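/- Define the operator Υ by ΥF = X(TF) − T(XF) for smooth F : ℂ² → ℂ. Then at every point p ∈ S: (Υz₁)(p) = −p₁, (Υz₂)(p) = −p₂, (Υw₁)(p) = w₁(p), and (Υw₂)(p) = w₂(p), where z₁, z₂ denote the coordinate functions. -/

import Mathlib

open Complex

/-- Wirtinger derivative ∂F/∂z_j at p. -/
noncomputable def wirtZ {n : ℕ} (F : (Fin n → ℂ) → ℂ) (p : Fin n → ℂ) (j : Fin n) : ℂ :=
  (1/2) * (fderiv ℝ F p (Pi.single j 1) - I * fderiv ℝ F p (Pi.single j I))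

/-- Wirtinger derivative ∂F/∂z̄_j at p. -/
noncomputable def wirtZbar {n : ℕ} (F : (Fin n → ℂ) → ℂ) (p : Fin n → ℂ) (j : Fin n) : ℂ :=
  (1/2) * (fderiv ℝ F p (Pi.single j 1) + I * fderiv ℝ F p (Pi.single j I))

/-- The projective dual coordinates w_j(z) = (∂ρ/∂z_j)/(Σ_k z_k ∂ρ/∂z_k). -/
noncomputable def wC {n : ℕ} (ρ : (Fin n → ℂ) → ℝ) (z : Fin n → ℂ) (j : Fin n) : ℂ :=
  wirtZ (fun q => (ρ q : ℂ)) z j / ∑ k, z k * wirtZ (fun q => (ρ q : ℂ)) z k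

/-- The operator T F = w₂ ∂F/∂z₁ − w₁ ∂F/∂z₂ + α₁ ∂F/∂z̄₁ + α₂ ∂F/∂z̄₂. -/
noncomputable def Top2 (ρ : (Fin 2 → ℂ) → ℝ) (α : (Fin 2 → ℂ) → Fin 2 → ℂ)
    (F : (Fin 2 → ℂ) → ℂ) (p : Fin 2 → ℂ) : ℂ :=
  wC ρ p 1 * wirtZ F p 0 - wC ρ p 0 * wirtZ F p 1
    + α p 0 * wirtZbar F p 0 + α p 1 * wirtZbar F p 1

/-- The operator X F = b₁ ∂F/∂z̄₁ + b₂ ∂F/∂z̄₂. -/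
noncomputable def Xop2 (b : (Fin 2 → ℂ) → Fin 2 → ℂ)
    (F : (Fin 2 → ℂ) → ℂ) (p : Fin 2 → ℂ) : ℂ :=
  b p 0 * wirtZbar F p 0 + b p 1 * wirtZbar F p 1

/-!
Near a point of `S = {ρ = 0}` where `dρ ≠ 0`, the implicit function theorem parametrizes `S`, so a
function vanishing on `S` has its differential proportional to `dρ`; hence every vector field tangent
to `S` kills it at points of `S`. Since `T z₁ = w₂`, `T z₂ = -w₁` and `X` kills the coordinates,
`Υ z_j` is read off from `X w`. For `Υ w_j`, the term `X (T w_j)` vanishes because `T w_j = 0` on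
`S`, and in `T (X w_j)` the function `X w_j` may be replaced by `z₂`, resp. `-z₁`, which agrees with
it on `S`.
-/

open Filter Topology

theorem LinearMap.exists_eq_smul_of_ker_le {K V W : Type*} [Field K] [AddCommGroup V] [Module K V]
    [AddCommGroup W] [Module K W] {φ : V →ₗ[K] K} (hφ : φ ≠ 0) {L : V →ₗ[K] W}
    (h : ∀ v, φ v = 0 → L v = 0) : ∃ γ : W, ∀ v, L v = φ v • γ := by
  obtain ⟨u, hu⟩ : ∃ u, φ u ≠ 0 := by
    by_contra! h0
    exact hφ (LinearMap.ext h0)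
  refine ⟨(φ u)⁻¹ • L u, fun v => ?_⟩
  have hker : φ (v - (φ v / φ u) • u) = 0 := by
    rw [map_sub, map_smul, smul_eq_mul, div_mul_cancel₀ _ hu, sub_self]
  rw [smul_smul, ← div_eq_mul_inv, ← map_smul, ← sub_eq_zero, ← map_sub]
  exact h _ hker

section LevelSet

variable {𝕜 : Type*} [NontriviallyNormedField 𝕜] [CompleteSpace 𝕜]
  {E : Type*} [NormedAddCommGroup E] [NormedSpace 𝕜 E] [CompleteSpace E]
  {F : Type*} [NormedAddCommGroup F] [NormedSpace 𝕜 F]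

theorem fderiv_apply_eq_zero_of_eqOn_levelSet {ρ : E → 𝕜} {ρ' : E →L[𝕜] 𝕜} {p : E}
    (hρ : HasStrictFDerivAt ρ ρ' p) (hρ' : ρ' ≠ 0) {G : E → F}
    (hG : ∀ x ∈ ρ ⁻¹' {ρ p}, G x = 0) {v : E} (hv : ρ' v = 0) : fderiv 𝕜 G p v = 0 := by
  by_cases hGd : DifferentiableAt 𝕜 G p
  swap
  · simp [fderiv_zero_of_not_differentiableAt hGd]
  have hsurj : ρ'.range = ⊤ :=
    LinearMap.range_eq_top.2 (LinearMap.surjective (fun h => hρ' (ContinuousLinearMap.coe_injective h)))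
  set ψ := hρ.implicitFunction ρ ρ' hsurj (ρ p)
  have hψ : HasFDerivAt ψ ρ'.ker.subtypeL 0 := (hρ.to_implicitFunction hsurj).hasFDerivAt
  have hψ0 : ψ 0 = p := hρ.implicitFunction_apply_image hsurj
  have hGψ : G ∘ ψ =ᶠ[𝓝 0] fun _ => 0 := by
    have hlevel : ∀ᶠ y : ρ'.ker in 𝓝 0, ρ (ψ y) = ρ p :=
      (tendsto_const_nhds.prodMk_nhds tendsto_id).eventually
        (hρ.map_implicitFunction_eq hsurj)
    filter_upwards [hlevel] with y hy using hG _ hy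
  have hcomp : HasFDerivAt (G ∘ ψ) ((fderiv 𝕜 G p).comp ρ'.ker.subtypeL) 0 :=
    HasFDerivAt.comp (g := G) 0 (by rw [hψ0]; exact hGd.hasFDerivAt) hψ
  have hzero := hcomp.unique ((hasFDerivAt_const (0 : F) (0 : ρ'.ker)).congr_of_eventuallyEq hGψ)
  simpa using DFunLike.congr_fun hzero ⟨v, hv⟩

theorem exists_fderiv_eq_smul_of_eqOn_levelSet {ρ : E → 𝕜} {ρ' : E →L[𝕜] 𝕜} {p : E}
    (hρ : HasStrictFDerivAt ρ ρ' p) (hρ' : ρ' ≠ 0) {G : E → F}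
    (hG : ∀ x ∈ ρ ⁻¹' {ρ p}, G x = 0) : ∃ γ : F, ∀ v, fderiv 𝕜 G p v = ρ' v • γ :=
  LinearMap.exists_eq_smul_of_ker_le (φ := (ρ' : E →ₗ[𝕜] 𝕜))
    (fun h => hρ' (ContinuousLinearMap.coe_injective h))
    (L := (fderiv 𝕜 G p : E →ₗ[𝕜] F)) fun _ hv => fderiv_apply_eq_zero_of_eqOn_levelSet hρ hρ' hG hv

end LevelSet

section Wirtinger

variable {n : ℕ}

theorem fderiv_ofReal_comp_apply {E : Type*} [NormedAddCommGroup E] [NormedSpace ℝ E]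
    {ρ : E → ℝ} {p : E} (hρ : DifferentiableAt ℝ ρ p) (v : E) :
    fderiv ℝ (fun q => (ρ q : ℂ)) p v = fderiv ℝ ρ p v :=
  DFunLike.congr_fun (ofRealCLM.hasFDerivAt.comp p hρ.hasFDerivAt).fderiv v

theorem wirtZ_eq_mul_of_fderiv_eq {F H : (Fin n → ℂ) → ℂ} {p : Fin n → ℂ} {γ : ℂ}
    (h : ∀ v, fderiv ℝ F p v = fderiv ℝ H p v * γ) (j : Fin n) :
    wirtZ F p j = γ * wirtZ H p j := by
  simp only [wirtZ, h]; ring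

theorem wirtZbar_eq_mul_of_fderiv_eq {F H : (Fin n → ℂ) → ℂ} {p : Fin n → ℂ} {γ : ℂ}
    (h : ∀ v, fderiv ℝ F p v = fderiv ℝ H p v * γ) (j : Fin n) :
    wirtZbar F p j = γ * wirtZbar H p j := by
  simp only [wirtZbar, h]; ring

theorem wirtZ_sub {F H : (Fin n → ℂ) → ℂ} {p : Fin n → ℂ} (hF : DifferentiableAt ℝ F p)
    (hH : DifferentiableAt ℝ H p) (j : Fin n) :
    wirtZ (fun z => F z - H z) p j = wirtZ F p j - wirtZ H p j := by
  simp only [wirtZ, fderiv_fun_sub hF hH, sub_apply]; ring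

theorem wirtZbar_sub {F H : (Fin n → ℂ) → ℂ} {p : Fin n → ℂ} (hF : DifferentiableAt ℝ F p)
    (hH : DifferentiableAt ℝ H p) (j : Fin n) :
    wirtZbar (fun z => F z - H z) p j = wirtZbar F p j - wirtZbar H p j := by
  simp only [wirtZbar, fderiv_fun_sub hF hH, sub_apply]; ring

theorem wirtZ_neg (F : (Fin n → ℂ) → ℂ) (p : Fin n → ℂ) (j : Fin n) :
    wirtZ (fun z => -F z) p j = -wirtZ F p j := by
  simp only [wirtZ, fderiv_fun_neg, neg_apply]; ring

theorem wirtZbar_neg (F : (Fin n → ℂ) → ℂ) (p : Fin n → ℂ) (j : Fin n) :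
    wirtZbar (fun z => -F z) p j = -wirtZbar F p j := by
  simp only [wirtZbar, fderiv_fun_neg, neg_apply]; ring

@[simp]
theorem wirtZ_zero (p : Fin n → ℂ) (j : Fin n) : wirtZ 0 p j = 0 := by
  simp [wirtZ]

@[simp]
theorem wirtZbar_zero (p : Fin n → ℂ) (j : Fin n) : wirtZbar 0 p j = 0 := by
  simp [wirtZbar]

@[simp]
theorem wirtZ_coord (j k : Fin n) (p : Fin n → ℂ) :
    wirtZ (fun z => z j) p k = if k = j then 1 else 0 := by
  have hderiv := (hasFDerivAt_apply (𝕜 := ℝ) j p).fderiv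
  rcases eq_or_ne k j with rfl | h
  · simp [wirtZ, hderiv, I_mul_I]; ring
  · simp [wirtZ, hderiv, h]

@[simp]
theorem wirtZbar_coord (j k : Fin n) (p : Fin n → ℂ) : wirtZbar (fun z => z j) p k = 0 := by
  have hderiv := (hasFDerivAt_apply (𝕜 := ℝ) j p).fderiv
  rcases eq_or_ne k j with rfl | h
  · simp [wirtZbar, hderiv, I_mul_I]
  · simp [wirtZbar, hderiv, h]

theorem exists_wirt_eq_mul_of_eqOn_zero {ρ : (Fin n → ℂ) → ℝ} {p : Fin n → ℂ}
    (hρ : ContDiffAt ℝ 1 ρ p) (hp : p ∈ ρ ⁻¹' {0}) (hDρ : fderiv ℝ ρ p ≠ 0)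
    {G : (Fin n → ℂ) → ℂ} (hG : ∀ x ∈ ρ ⁻¹' {0}, G x = 0) :
    ∃ γ : ℂ, (∀ j, wirtZ G p j = γ * wirtZ (fun q => (ρ q : ℂ)) p j) ∧
      ∀ j, wirtZbar G p j = γ * wirtZbar (fun q => (ρ q : ℂ)) p j := by
  rw [Set.mem_preimage, Set.mem_singleton_iff] at hp
  obtain ⟨γ, hγ⟩ := exists_fderiv_eq_smul_of_eqOn_levelSet (hρ.hasStrictFDerivAt one_ne_zero) hDρ
    (hp ▸ hG)
  have hfderiv : ∀ v, fderiv ℝ G p v = fderiv ℝ (fun q => (ρ q : ℂ)) p v * γ := fun v => by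
    rw [hγ, fderiv_ofReal_comp_apply (hρ.differentiableAt one_ne_zero), real_smul]
  exact ⟨γ, wirtZ_eq_mul_of_fderiv_eq hfderiv, wirtZbar_eq_mul_of_fderiv_eq hfderiv⟩

theorem ContDiffAt.wirtZ {F : (Fin n → ℂ) → ℂ} {p : Fin n → ℂ} {m : WithTop ℕ∞}
    (hF : ContDiffAt ℝ (m + 1) F p) (j : Fin n) : ContDiffAt ℝ m (fun q => wirtZ F q j) p := by
  have hF' := hF.fderiv_right_succ
  unfold _root_.wirtZ
  exact contDiffAt_const.mul ((hF'.clm_apply contDiffAt_const).sub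
    (contDiffAt_const.mul (hF'.clm_apply contDiffAt_const)))

theorem ContDiffAt.wirtZbar {F : (Fin n → ℂ) → ℂ} {p : Fin n → ℂ} {m : WithTop ℕ∞}
    (hF : ContDiffAt ℝ (m + 1) F p) (j : Fin n) : ContDiffAt ℝ m (fun q => wirtZbar F q j) p := by
  have hF' := hF.fderiv_right_succ
  unfold _root_.wirtZbar
  exact contDiffAt_const.mul ((hF'.clm_apply contDiffAt_const).add
    (contDiffAt_const.mul (hF'.clm_apply contDiffAt_const)))

theorem ContDiffAt.wC {ρ : (Fin n → ℂ) → ℝ} {p : Fin n → ℂ} {m : WithTop ℕ∞}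
    (hρ : ContDiffAt ℝ (m + 1) ρ p) (hden : ∑ k, p k * _root_.wirtZ (fun q => (ρ q : ℂ)) p k ≠ 0)
    (j : Fin n) : ContDiffAt ℝ m (fun q => _root_.wC ρ q j) p := by
  have hρC : ContDiffAt ℝ (m + 1) (fun q => (ρ q : ℂ)) p :=
    ofRealCLM.contDiff.contDiffAt.comp p hρ
  have hsum : ContDiffAt ℝ m (fun q => ∑ k, q k * _root_.wirtZ (fun q => (ρ q : ℂ)) q k) p :=
    ContDiffAt.sum fun k _ => (contDiffAt_apply ℝ ℂ k p).mul (hρC.wirtZ k)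
  simp only [_root_.wC, div_eq_mul_inv]
  exact (hρC.wirtZ j).mul (hsum.inv hden)

end Wirtinger

section Operators

variable {ρ : (Fin 2 → ℂ) → ℝ} {α b : (Fin 2 → ℂ) → Fin 2 → ℂ} {p : Fin 2 → ℂ}

theorem Xop2_eq_zero_of_eqOn_zero (hρ : ContDiffAt ℝ 1 ρ p) (hp : p ∈ ρ ⁻¹' {0})
    (hDρ : fderiv ℝ ρ p ≠ 0)
    (hb : b p 0 * wirtZbar (fun q => (ρ q : ℂ)) p 0 + b p 1 * wirtZbar (fun q => (ρ q : ℂ)) p 1 = 0)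
    ⦃G : (Fin 2 → ℂ) → ℂ⦄ (hG : ∀ x ∈ ρ ⁻¹' {0}, G x = 0) : Xop2 b G p = 0 := by
  obtain ⟨γ, -, hbar⟩ := exists_wirt_eq_mul_of_eqOn_zero hρ hp hDρ hG
  rw [Xop2, hbar, hbar]
  linear_combination γ * hb

theorem Top2_eq_zero_of_eqOn_zero (hρ : ContDiffAt ℝ 1 ρ p) (hp : p ∈ ρ ⁻¹' {0})
    (hDρ : fderiv ℝ ρ p ≠ 0)
    (hα : α p 0 * wirtZbar (fun q => (ρ q : ℂ)) p 0 + α p 1 * wirtZbar (fun q => (ρ q : ℂ)) p 1 = 0)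
    ⦃G : (Fin 2 → ℂ) → ℂ⦄ (hG : ∀ x ∈ ρ ⁻¹' {0}, G x = 0) : Top2 ρ α G p = 0 := by
  obtain ⟨γ, hhol, hbar⟩ := exists_wirt_eq_mul_of_eqOn_zero hρ hp hDρ hG
  rw [Top2, hhol, hhol, hbar, hbar, wC, wC]
  -- the holomorphic part cancels identically, whatever the denominator of `w`
  linear_combination γ * hα

theorem Top2_sub {F H : (Fin 2 → ℂ) → ℂ} (hF : DifferentiableAt ℝ F p)
    (hH : DifferentiableAt ℝ H p) :
    Top2 ρ α (fun z => F z - H z) p = Top2 ρ α F p - Top2 ρ α H p := by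
  simp only [Top2, wirtZ_sub hF hH, wirtZbar_sub hF hH]; ring

theorem Top2_eq_of_eqOn (hρ : ContDiffAt ℝ 1 ρ p) (hp : p ∈ ρ ⁻¹' {0})
    (hDρ : fderiv ℝ ρ p ≠ 0)
    (hα : α p 0 * wirtZbar (fun q => (ρ q : ℂ)) p 0 + α p 1 * wirtZbar (fun q => (ρ q : ℂ)) p 1 = 0)
    ⦃F H : (Fin 2 → ℂ) → ℂ⦄ (hF : DifferentiableAt ℝ F p) (hH : DifferentiableAt ℝ H p)
    (hFH : ∀ x ∈ ρ ⁻¹' {0}, F x = H x) : Top2 ρ α F p = Top2 ρ α H p := by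
  rw [← sub_eq_zero, ← Top2_sub hF hH]
  exact Top2_eq_zero_of_eqOn_zero hρ hp hDρ hα fun x hx => sub_eq_zero.2 (hFH x hx)

theorem Top2_neg (F : (Fin 2 → ℂ) → ℂ) : Top2 ρ α (fun z => -F z) p = -Top2 ρ α F p := by
  simp only [Top2, wirtZ_neg, wirtZbar_neg]; ring

theorem Xop2_neg (F : (Fin 2 → ℂ) → ℂ) : Xop2 b (fun z => -F z) p = -Xop2 b F p := by
  simp only [Xop2, wirtZbar_neg]; ring

@[simp]
theorem Top2_zero : Top2 ρ α 0 p = 0 := by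
  simp [Top2]

theorem Top2_coord_zero : Top2 ρ α (fun z => z 0) = fun q => wC ρ q 1 := by
  funext q
  simp [Top2]

theorem Top2_coord_one : Top2 ρ α (fun z => z 1) = fun q => -wC ρ q 0 := by
  funext q
  simp [Top2]

theorem Xop2_coord (j : Fin 2) : Xop2 b (fun z => z j) = 0 := by
  funext q
  simp [Xop2]

theorem ContDiffAt.Xop2 {F : (Fin 2 → ℂ) → ℂ} {m : WithTop ℕ∞} (hb : ContDiffAt ℝ m b p)
    (hF : ContDiffAt ℝ (m + 1) F p) : ContDiffAt ℝ m (_root_.Xop2 b F) p := by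
  have hbj := contDiffAt_pi.1 hb
  exact ((hbj 0).mul (hF.wirtZbar 0)).add ((hbj 1).mul (hF.wirtZbar 1))

end Operators

theorem upsilon_on_coordinates
    (ρ : (Fin 2 → ℂ) → ℝ) (hρ : ContDiff ℝ (⊤ : ℕ∞) ρ)
    (S : Set (Fin 2 → ℂ)) (hSdef : S = ρ ⁻¹' {0})
    (hDρ : ∀ p ∈ S, fderiv ℝ ρ p ≠ 0)
    (hsum : ∀ p ∈ S, (∑ k, p k * wirtZ (fun q => (ρ q : ℂ)) p k) ≠ 0)
    (α b : (Fin 2 → ℂ) → Fin 2 → ℂ)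
    (hb : ContDiff ℝ (⊤ : ℕ∞) b)
    (hαtan : ∀ p ∈ S,
      α p 0 * wirtZbar (fun q => (ρ q : ℂ)) p 0 + α p 1 * wirtZbar (fun q => (ρ q : ℂ)) p 1 = 0)
    (hbtan : ∀ p ∈ S,
      b p 0 * wirtZbar (fun q => (ρ q : ℂ)) p 0 + b p 1 * wirtZbar (fun q => (ρ q : ℂ)) p 1 = 0)
    (hTw1 : ∀ p ∈ S, Top2 ρ α (fun z => wC ρ z 0) p = 0)
    (hTw2 : ∀ p ∈ S, Top2 ρ α (fun z => wC ρ z 1) p = 0)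
    (hXw1 : ∀ p ∈ S, Xop2 b (fun z => wC ρ z 0) p = p 1)
    (hXw2 : ∀ p ∈ S, Xop2 b (fun z => wC ρ z 1) p = -(p 0))
    : ∀ p ∈ S,
      (Xop2 b (Top2 ρ α (fun z => z 0)) p - Top2 ρ α (Xop2 b (fun z => z 0)) p = -(p 0)) ∧
      (Xop2 b (Top2 ρ α (fun z => z 1)) p - Top2 ρ α (Xop2 b (fun z => z 1)) p = -(p 1)) ∧
      (Xop2 b (Top2 ρ α (fun z => wC ρ z 0)) p - Top2 ρ α (Xop2 b (fun z => wC ρ z 0)) p = wC ρ p 0) ∧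
      (Xop2 b (Top2 ρ α (fun z => wC ρ z 1)) p - Top2 ρ α (Xop2 b (fun z => wC ρ z 1)) p = wC ρ p 1) := by
  subst hSdef
  intro p hp
  have hρ3 : ContDiffAt ℝ (1 + 1 + 1) ρ p := hρ.contDiffAt.of_le (WithTop.coe_le_coe.2 le_top)
  have hρ1 : ContDiffAt ℝ 1 ρ p := hρ.contDiffAt.of_le (by simp)
  have hXw_diff : ∀ j, DifferentiableAt ℝ (Xop2 b (fun z => wC ρ z j)) p := fun j =>
    ((hb.contDiffAt.of_le (by simp)).Xop2 (hρ3.wC (hsum p hp) j)).differentiableAt one_ne_zero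
  have hX_zero := Xop2_eq_zero_of_eqOn_zero hρ1 hp (hDρ p hp) (hbtan p hp)
  have hT_eq := Top2_eq_of_eqOn hρ1 hp (hDρ p hp) (hαtan p hp)
  refine ⟨?_, ?_, ?_, ?_⟩
  · rw [Top2_coord_zero, Xop2_coord, Top2_zero, hXw2 p hp, sub_zero]
  · rw [Top2_coord_one, Xop2_neg, Xop2_coord, Top2_zero, hXw1 p hp, sub_zero]
  · rw [hX_zero hTw1, hT_eq (hXw_diff 0) (differentiableAt_apply 1 p) hXw1, congrFun Top2_coord_one]
    ring
  · rw [hX_zero hTw2, hT_eq (H := fun z => -z 0) (hXw_diff 1) (differentiableAt_apply 0 p).neg hXw2,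
      Top2_neg, congrFun Top2_coord_zero]
    ring
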